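/- arXiv:2008.00284 — 13 statements merged into one kernel-verified Lean document; each statement's English description precedes it below -/
import Mathlib

section
/- For all nonnegative integers n and positive integers p, q: sum_{k=0}^{2n} (-1)^k * binomial(q+k-1, k) * H_{2n-k}^{(p,q)} = (1/2^p) * H_n^{(p,q)}, where H_n^{(p,q)} are the generalized hyperharmonic numbers. -/
open Finset

/-- `harmonic m` is the `m`-th harmonic number `H_m = ∑_{k=1}^m 1/k`. -/
def harmonic' (m : ℕ) : ℚ := ∑ k ∈ Finset.range m, 1/(k+1 : ℚ)

/-- Hyperharmonic numbers: `hyperh r n = h_n^{(r)}` with `h_n^{(0)} = 1/n`. -/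
def hyperh : ℕ → ℕ → ℚ
  | 0, n => if n = 0 then 0 else 1/(n:ℚ)
  | r+1, n => ∑ k ∈ Finset.Icc 1 n, hyperh r k

/-- Generalized hyperharmonic numbers: `GH p r n = H_n^{(p,r)}` with `H_k^{(p,0)} = 1/k^p`. -/
def GH (p : ℤ) : ℕ → ℕ → ℚ
  | 0, n => if n = 0 then 0 else (n:ℚ)^(-p)
  | r+1, n => ∑ k ∈ Finset.Icc 1 n, GH p r k

/-- Generalized harmonic numbers `H_m^{(p)} = ∑_{j=1}^m 1/j^p`. -/
def genH (p m : ℕ) : ℚ := ∑ j ∈ Finset.Icc 1 m, 1/(j:ℚ)^p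

/-- Hyper-sums: `hS p q n = S_p^{(q)}(n)` with `S_p^{(0)}(n) = ∑_{k=1}^n k^p`. -/
def hS (p : ℕ) : ℕ → ℕ → ℕ
  | 0, n => ∑ k ∈ Finset.Icc 1 n, k^p
  | q+1, n => ∑ k ∈ Finset.Icc 1 n, hS p q k

/-- Stirling numbers of the second kind. -/
def stirling2 : ℕ → ℕ → ℕ
  | 0, 0 => 1
  | 0, _+1 => 0
  | _+1, 0 => 0
  | n+1, k+1 => (k+1) * stirling2 n (k+1) + stirling2 n k

/-- `r`-Stirling numbers of the second kind: `rstirling2 r n k = {n+r, k+r}_r`. -/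
def rstirling2 (r : ℕ) : ℕ → ℕ → ℕ
  | 0, 0 => 1
  | 0, _+1 => 0
  | n+1, 0 => r * rstirling2 r n 0
  | n+1, k+1 => (k+1+r) * rstirling2 r n (k+1) + rstirling2 r n k

/-- `r`-Stirling numbers of the first kind: `rstirling1 r n k = [n+r, k+r]_r`.
In particular `rstirling1 0 n k` is the unsigned Stirling number of the first kind. -/
def rstirling1 (r : ℕ) : ℕ → ℕ → ℕ
  | 0, 0 => 1
  | 0, _+1 => 0
  | n+1, 0 => (n+r) * rstirling1 r n 0
  | n+1, k+1 => (n+r) * rstirling1 r n (k+1) + rstirling1 r n k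

/-- Binomial coefficient with (possibly negative) integer upper argument. -/
def binomZ (x : ℤ) (k : ℕ) : ℚ :=
  (∏ i ∈ Finset.range k, ((x:ℚ) - i)) / (Nat.factorial k)

/-- Congruence of rationals mod `m`: `x ≡ y (mod m)` iff `m ∣ (x.num * y.den - y.num * x.den)`. -/
def ratMod (m : ℕ) (x y : ℚ) : Prop := (m:ℤ) ∣ (x.num * (y.den:ℤ) - y.num * (x.den:ℤ))

/-- Poly-Bernoulli numbers of negative index: `polyBN p n = B_n^{(-p)}`. -/
def polyBN (p n : ℕ) : ℤ :=
  (-1)^n * ∑ m ∈ Finset.range (n+1),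
    (stirling2 n m : ℤ) * (-1)^m * (Nat.factorial m : ℤ) * ((m:ℤ)+1)^p

/-- Poly-Bernoulli polynomial values of negative index: `polyBP p n q = B_n^{(-p)}(q)`. -/
def polyBP (p n q : ℕ) : ℤ :=
  ∑ j ∈ Finset.range (n+1), (n.choose j : ℤ) * polyBN p j * (q:ℤ)^(n-j)

/-! Let `F_r = ∑ₙ H_n^{(p,r)} Xⁿ`. Taking partial sums is multiplication by `(1 - X)⁻¹`, so
`F_q = (1 - X)^{-q} F_0`, and the left side is the coefficient of `X^{2n}` in
`(1 + X)^{-q} F_q = (1 - X²)^{-q} F_0(X)`. Only the even coefficients of `F_0` contribute, and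
`(2m)^{-p} = 2^{-p} m^{-p}`, so this equals `2^{-p}` times the coefficient of `Xⁿ` in
`(1 - X)^{-q} F_0 = F_q`. -/

open PowerSeries

lemma GH_at_zero (p : ℤ) : ∀ r, GH p r 0 = 0
  | 0 => by simp [GH]
  | _ + 1 => by simp [GH]

lemma GH_zero_two_mul (p : ℤ) (m : ℕ) : GH p 0 (2 * m) = 2 ^ (-p) * GH p 0 m := by
  rcases eq_or_ne m 0 with rfl | hm
  · simp [GH]
  · simp [GH, hm, mul_zpow, mul_comm]

lemma GH_succ_eq_sum_range (p : ℤ) (r m : ℕ) :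
    GH p (r + 1) m = ∑ k ∈ range (m + 1), GH p r k := by
  rw [GH, Nat.range_succ_eq_Icc_zero, ← sum_Ioc_add_eq_sum_Icc m.zero_le, GH_at_zero,
    add_zero]
  rfl

lemma mk_GH_succ (p : ℤ) (r : ℕ) :
    PowerSeries.mk (GH p (r + 1)) = PowerSeries.mk (GH p r) * PowerSeries.mk 1 := by
  ext m
  simp only [coeff_mk, coeff_mul, Pi.one_apply, mul_one]
  rw [Nat.sum_antidiagonal_eq_sum_range_succ (fun i _ => GH p r i), GH_succ_eq_sum_range]

lemma mk_GH_eq_invOneSubPow_mul (p : ℤ) (r : ℕ) :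
    PowerSeries.mk (GH p r) = (invOneSubPow ℚ r).val * PowerSeries.mk (GH p 0) := by
  induction r with
  | zero => simp [invOneSubPow_zero]
  | succ r ih =>
    have h1 : (invOneSubPow ℚ 1).val = PowerSeries.mk 1 := by
      ext; simp [invOneSubPow_val_succ_eq_mk_add_choose]
    rw [mk_GH_succ, ih, invOneSubPow_add, Units.val_mul, h1]
    ring

/-- For `d = 0` the truncated subtraction makes the right side `1` at `k = 0` and `0` otherwise. -/
lemma coeff_invOneSubPow (R : Type*) [CommRing R] (d k : ℕ) :
    coeff k (invOneSubPow R d).val = ((d + k - 1).choose k : R) := by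
  cases d with
  | zero =>
    rcases eq_or_ne k 0 with rfl | hk
    · simp [invOneSubPow_zero]
    · simp [invOneSubPow_zero, coeff_one, hk, Nat.choose_eq_zero_of_lt (by omega : k - 1 < k)]
  | succ d =>
    rw [invOneSubPow_val_succ_eq_mk_add_choose, coeff_mk, Nat.add_right_comm, Nat.add_sub_cancel,
      Nat.choose_symm_add]

lemma rescale_neg_one_mul_self_invOneSubPow (R : Type*) [CommRing R] (d : ℕ) :
    rescale (-1) (invOneSubPow R d).val * (invOneSubPow R d).val
      = expand 2 two_ne_zero (invOneSubPow R d).val := by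
  have h : (invOneSubPow R d).val * (1 - X) ^ d = 1 := by
    rw [← invOneSubPow_inv_eq_one_sub_pow]; exact (invOneSubPow R d).val_inv
  have hneg : rescale (-1) (invOneSubPow R d).val * (1 + X) ^ d = 1 := by
    simpa [rescale_neg_one_X, sub_neg_eq_add] using congrArg (rescale (-1 : R)) h
  have hexp : expand 2 two_ne_zero (invOneSubPow R d).val * (1 - X ^ 2) ^ d = 1 := by
    simpa using congrArg (expand 2 two_ne_zero) h
  refine left_inv_eq_right_inv (a := (1 - X ^ 2) ^ d) ?_ (by rw [mul_comm, hexp])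
  rw [show (1 - X ^ 2 : R⟦X⟧) = (1 + X) * (1 - X) by ring, mul_pow]
  calc _ = (rescale (-1) (invOneSubPow R d).val * (1 + X) ^ d)
          * ((invOneSubPow R d).val * (1 - X) ^ d) := by ring
    _ = 1 := by rw [h, hneg, one_mul]

lemma coeff_mul_expand_mul {R : Type*} [CommRing R] (c : ℕ) (hc : c ≠ 0) (G F : R⟦X⟧)
    (n : ℕ) :
    coeff (c * n) (expand c hc G * F)
      = coeff n (G * PowerSeries.mk fun b => coeff (c * b) F) := by
  rw [coeff_mul, coeff_mul]
  symm
  refine sum_of_injOn (fun x => (c * x.1, c * x.2)) ?_ ?_ ?_ ?_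
  · intro x _ y _ hxy
    simp only [Prod.mk.injEq, mul_right_inj' hc] at hxy
    exact Prod.ext hxy.1 hxy.2
  · intro x hx
    simp only [Finset.mem_coe, HasAntidiagonal.mem_antidiagonal] at hx ⊢
    rw [← mul_add, hx]
  · rintro ⟨i, j⟩ hij hij_notin
    rw [coeff_expand, if_neg, zero_mul]
    rintro ⟨a, rfl⟩
    rw [HasAntidiagonal.mem_antidiagonal] at hij
    obtain ⟨b, rfl⟩ : c ∣ j :=
      (Nat.dvd_add_right (dvd_mul_right c a)).1 (hij ▸ dvd_mul_right c n)
    refine hij_notin ⟨(a, b), ?_, rfl⟩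
    simp only [Finset.mem_coe, HasAntidiagonal.mem_antidiagonal]
    rw [← mul_add] at hij
    exact Nat.eq_of_mul_eq_mul_left (Nat.pos_of_ne_zero hc) hij
  · intro x _
    rw [coeff_expand_mul, coeff_mk]

theorem stmt2_general (n p q : ℕ) :
    ∑ k ∈ Finset.range (2*n+1), (-1:ℚ)^k * ((q+k-1).choose k : ℚ) * GH (p:ℤ) q (2*n - k)
      = (1/2^p) * GH (p:ℤ) q n := by
  have hLHS : ∑ k ∈ range (2*n+1), (-1:ℚ)^k * ((q+k-1).choose k : ℚ) * GH p q (2*n - k)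
      = coeff (2 * n) (rescale (-1) (invOneSubPow ℚ q).val * PowerSeries.mk (GH p q)) := by
    rw [coeff_mul, Nat.sum_antidiagonal_eq_sum_range_succ fun i j =>
      coeff i (rescale (-1) (invOneSubPow ℚ q).val) * coeff j (PowerSeries.mk (GH p q))]
    simp only [coeff_rescale, coeff_invOneSubPow, coeff_mk, mul_assoc]
  have hEven : (PowerSeries.mk fun b => coeff (2 * b) (PowerSeries.mk (GH p 0)))
      = C (2 ^ (-(p : ℤ))) * PowerSeries.mk (GH p 0) := by
    ext b
    rw [coeff_mk, coeff_mk, coeff_C_mul, coeff_mk, GH_zero_two_mul]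
  rw [hLHS, mk_GH_eq_invOneSubPow_mul, ← mul_assoc, rescale_neg_one_mul_self_invOneSubPow,
    coeff_mul_expand_mul, hEven, mul_left_comm, coeff_C_mul, ← mk_GH_eq_invOneSubPow_mul,
    coeff_mk, zpow_neg, zpow_natCast, one_div]

theorem stmt2 (n p q : ℕ) (hp : 0 < p) (hq : 0 < q) :
    ∑ k ∈ Finset.range (2*n+1), (-1:ℚ)^k * ((q+k-1).choose k : ℚ) * GH (p:ℤ) q (2*n - k)
      = (1/2^p) * GH (p:ℤ) q n :=
  stmt2_general n p q
end

section
/- For all nonnegative integers n and positive integers p, q: H_n^{(p,q+1)} = sum_{k=0}^n (-1)^k * binomial(p-q, k) * H_{n-k}^{(p,p+1)}, where binomial(p-q,k) is the (possibly negative upper argument) binomial coefficient and H_n^{(p,r)} are the generalized hyperharmonic numbers. -/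
open Finset

/-!
The generating series of `n ↦ H_n^{(p,r)}` is `Li_p(x) / (1 - x)^r`, so `H^{(p,r)}` is the coefficient
sequence of `(1 - x)^{s - r}` times that of `H^{(p,s)}`, for any `s`. Formally, lowering `r` by one
is taking forward differences, which is what multiplication by `1 - x` does to a coefficient
sequence; as all sequences involved vanish at `n = 0`, the identity passes from `r + 1` to `r` and
back, hence from `r = s`, where it is trivial, to every `r`.
-/

lemma binomZ_zero_right (x : ℤ) : binomZ x 0 = 1 := by
  simp [binomZ]

lemma binomZ_zero_succ (k : ℕ) : binomZ 0 (k + 1) = 0 := by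
  simp [binomZ, Finset.prod_range_succ']

lemma binomZ_succ_succ (x : ℤ) (k : ℕ) :
    binomZ (x + 1) (k + 1) = binomZ x k + binomZ x (k + 1) := by
  have shift : ∏ i ∈ Finset.range (k + 1), (((x + 1 : ℤ) : ℚ) - i)
      = (x + 1) * ∏ i ∈ Finset.range k, ((x : ℚ) - i) := by
    rw [Finset.prod_range_succ', mul_comm]
    push_cast
    simp only [add_sub_add_right_eq_sub, sub_zero]
  rw [binomZ, binomZ, binomZ, shift, Finset.prod_range_succ, Nat.factorial_succ]
  push_cast
  field_simp
  ring

lemma GH_apply_zero (p : ℤ) (r : ℕ) : GH p r 0 = 0 := by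
  cases r <;> simp [GH]

lemma GH_succ_apply_succ (p : ℤ) (r m : ℕ) :
    GH p (r + 1) (m + 1) = GH p (r + 1) m + GH p r (m + 1) := by
  simp only [GH]
  exact Finset.sum_Icc_succ_top (by omega) _

lemma eq_of_apply_zero_of_sub_succ {M : Type*} [AddCommGroup M] {f g : ℕ → M} (h₀ : f 0 = g 0)
    (hsucc : ∀ m, f (m + 1) - f m = g (m + 1) - g m) : f = g := by
  funext n
  induction n with
  | zero => exact h₀
  | succ m ih => simpa [ih] using hsucc m

/-- The coefficients of `(1 - x)^u * ∑ a n x^n`. -/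
def oneSubPowMul (u : ℤ) (a : ℕ → ℚ) (n : ℕ) : ℚ :=
  ∑ k ∈ Finset.range (n + 1), (-1) ^ k * binomZ u k * a (n - k)

lemma oneSubPowMul_zero (a : ℕ → ℚ) : oneSubPowMul 0 a = a := by
  funext n
  rw [oneSubPowMul, Finset.sum_range_succ']
  simp [binomZ_zero_succ, binomZ_zero_right]

lemma oneSubPowMul_apply_zero (u : ℤ) (a : ℕ → ℚ) : oneSubPowMul u a 0 = a 0 := by
  simp [oneSubPowMul, binomZ_zero_right]

lemma oneSubPowMul_succ_apply_succ (u : ℤ) (a : ℕ → ℚ) (m : ℕ) :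
    oneSubPowMul (u + 1) a (m + 1) = oneSubPowMul u a (m + 1) - oneSubPowMul u a m := by
  simp only [oneSubPowMul]
  rw [Finset.sum_range_succ' _ (m + 1), Finset.sum_range_succ' _ (m + 1)]
  simp only [binomZ_succ_succ, binomZ_zero_right, Nat.add_sub_add_right, pow_succ]
  rw [← sub_add_eq_add_sub, ← Finset.sum_sub_distrib]
  congr 1
  exact Finset.sum_congr rfl fun k _ => by ring

theorem GH_eq_oneSubPowMul (p : ℤ) (r s : ℕ) : GH p r = oneSubPowMul ((s : ℤ) - r) (GH p s) := by
  set P : ℕ → Prop := fun r => GH p r = oneSubPowMul ((s : ℤ) - r) (GH p s)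
  have step : ∀ r, P r ↔ P (r + 1) := by
    intro r
    have hu : (s : ℤ) - r = (s : ℤ) - (r + 1 : ℕ) + 1 := by push_cast; ring
    simp only [P, hu]
    constructor
    · intro h
      refine eq_of_apply_zero_of_sub_succ (by simp [GH_apply_zero, oneSubPowMul_apply_zero])
        fun m => ?_
      rw [← oneSubPowMul_succ_apply_succ, ← h, GH_succ_apply_succ, add_sub_cancel_left]
    · intro h
      funext n
      cases n with
      | zero => simp [GH_apply_zero, oneSubPowMul_apply_zero]
      | succ m =>
        rw [oneSubPowMul_succ_apply_succ, ← h, GH_succ_apply_succ, add_sub_cancel_left]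
  have iff_zero : ∀ r, P r ↔ P 0 := fun r => by
    induction r with
    | zero => rfl
    | succ r ih => exact (step r).symm.trans ih
  refine ((iff_zero r).trans (iff_zero s).symm).mpr ?_
  simp only [P, sub_self, oneSubPowMul_zero]

theorem stmt3_general (n p q : ℕ) :
    GH (p:ℤ) (q+1) n
      = ∑ k ∈ Finset.range (n+1), (-1:ℚ)^k * binomZ ((p:ℤ) - (q:ℤ)) k * GH (p:ℤ) (p+1) (n-k) := by
  have h := congrFun (GH_eq_oneSubPowMul p (q + 1) (p + 1)) n
  rwa [Nat.cast_add_one, Nat.cast_add_one, add_sub_add_right_eq_sub] at h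

theorem stmt3 (n p q : ℕ) (hp : 0 < p) (hq : 0 < q) :
    GH (p:ℤ) (q+1) n
      = ∑ k ∈ Finset.range (n+1), (-1:ℚ)^k * binomZ ((p:ℤ) - (q:ℤ)) k * GH (p:ℤ) (p+1) (n-k) :=
  stmt3_general n p q
end

section
/- For all positive integers n and nonnegative integers p, q, the generalized hyperharmonic number with negative first index equals the hyper-sum: H_n^{(-p, q+1)} = S_p^{(q)}(n), where S_p^{(q)}(n) is the q-fold iterated sum of p-th powers. -/
open Finset

lemma GH_neg_zero_of_ne_zero (p : ℕ) {k : ℕ} (hk : k ≠ 0) : GH (-(p:ℤ)) 0 k = (k:ℚ)^p := by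
  simp [GH, hk]

theorem stmt4_general (n p q : ℕ) :
    GH (-(p:ℤ)) (q+1) n = (hS p q n : ℚ) := by
  induction q generalizing n with
  | zero =>
      rw [GH, hS, Nat.cast_sum]
      -- the sum starts at `k = 1`, away from the junk value `GH _ 0 0 = 0 ≠ 0 ^ 0`
      refine sum_congr rfl fun k hk => ?_
      rw [GH_neg_zero_of_ne_zero p (by grind), Nat.cast_pow]
  | succ q ih =>
      rw [GH, hS, Nat.cast_sum]
      exact sum_congr rfl fun k _ => ih k

theorem stmt4 (n p q : ℕ) (hn : 0 < n) :
    GH (-(p:ℤ)) (q+1) n = (hS p q n : ℚ) :=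
  stmt4_general n p q
end

section
/- For all positive integers n, p and nonnegative integers q: S_p^{(q)}(n) = sum_{j=0}^p j! * S(p+1, j+1) * binomial(n+q, j+q+1), where S(a,b) denotes the Stirling number of the second kind. -/
open Finset

/-!
Write `c_j = j! S(p+1, j+1)`. The Stirling recurrence together with
`(m+1) C(m, j) = (j+1) (C(m, j) + C(m, j+1))` gives `(m+1)^p = ∑_j c_j C(m, j)`. Summing over
`m < n` turns each `C(m + a, j + a)` into `C(n + a, j + a + 1)` by the hockey-stick identity, so
every summation step in the definition of the hyper-sums just raises both binomial indices by one.
-/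

open Nat

theorem stirling2_eq_stirlingSecond (n k : ℕ) : stirling2 n k = stirlingSecond n k := by
  induction n generalizing k with
  | zero => cases k <;> rfl
  | succ n ih =>
    cases k with
    | zero => rfl
    | succ k => rw [stirling2, stirlingSecond_succ_succ, ih, ih]

theorem add_one_pow_eq_sum_factorial_mul_stirlingSecond_mul_choose (p m : ℕ) :
    (m + 1) ^ p = ∑ j ∈ range (p + 1), j ! * stirlingSecond (p + 1) (j + 1) * m.choose j := by
  induction p with
  | zero => simp [stirlingSecond_self]
  | succ p ih =>
    have pascal (j : ℕ) :
        (m + 1) * m.choose j = (j + 1) * m.choose j + (j + 1) * m.choose (j + 1) := by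
      rw [add_one_mul_choose_eq, choose_succ_succ]; ring
    calc (m + 1) ^ (p + 1)
        = ∑ j ∈ range (p + 1),
            j ! * stirlingSecond (p + 1) (j + 1) * ((m + 1) * m.choose j) := by
          rw [_root_.pow_succ', ih, mul_sum]
          exact sum_congr rfl fun j _ => by ring
      _ = ∑ j ∈ range (p + 1), (j + 1)! * stirlingSecond (p + 1) (j + 1) * m.choose j
          + ∑ j ∈ range (p + 1),
              (j + 1)! * stirlingSecond (p + 1) (j + 1) * m.choose (j + 1) := by
          rw [← sum_add_distrib]
          refine sum_congr rfl fun j _ => ?_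
          rw [pascal, factorial_succ]; ring
      _ = ∑ j ∈ range (p + 2), (j + 1)! * stirlingSecond (p + 1) (j + 1) * m.choose j
          + ∑ j ∈ range (p + 2), j ! * stirlingSecond (p + 1) j * m.choose j := by
          rw [sum_range_succ _ (p + 1), sum_range_succ' _ (p + 1),
            stirlingSecond_eq_zero_of_lt (by omega : p + 1 < p + 1 + 1)]
          simp
      _ = ∑ j ∈ range (p + 2), j ! * stirlingSecond (p + 2) (j + 1) * m.choose j := by
          rw [← sum_add_distrib]
          refine sum_congr rfl fun j _ => ?_
          rw [stirlingSecond_succ_succ (p + 1) j, factorial_succ]; ring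

theorem sum_range_add_choose_add (n a j : ℕ) :
    ∑ k ∈ range n, (k + a).choose (j + a) = (n + a).choose (j + a + 1) := by
  induction n with
  | zero => simp [choose_eq_zero_of_lt (by omega : a < j + a + 1)]
  | succ n ih =>
    rw [sum_range_succ, ih, add_right_comm n 1 a, choose_succ_succ', add_comm]

theorem sum_range_sum_mul_add_choose_add (c : ℕ → ℕ) (N n a : ℕ) :
    ∑ k ∈ range n, ∑ j ∈ range N, c j * (k + a).choose (j + a) =
      ∑ j ∈ range N, c j * (n + a).choose (j + a + 1) := by
  rw [sum_comm]
  simp only [← mul_sum, sum_range_add_choose_add]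

theorem sum_Icc_one_eq_sum_range {M : Type*} [AddCommMonoid M] (f : ℕ → M) (n : ℕ) :
    ∑ k ∈ Icc 1 n, f k = ∑ k ∈ range n, f (k + 1) := by
  rw [← Finset.Ico_add_one_right_eq_Icc, sum_Ico_eq_sum_range]
  simp [add_comm]

theorem stmt6_general (n p q : ℕ) :
    hS p q n = ∑ j ∈ Finset.range (p+1),
      Nat.factorial j * stirling2 (p+1) (j+1) * (n+q).choose (j+q+1) := by
  simp only [stirling2_eq_stirlingSecond]
  induction q generalizing n with
  | zero =>
    rw [hS, sum_Icc_one_eq_sum_range]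
    simp only [add_one_pow_eq_sum_factorial_mul_stirlingSecond_mul_choose]
    exact sum_range_sum_mul_add_choose_add _ _ n 0
  | succ q ih =>
    rw [hS, sum_Icc_one_eq_sum_range]
    simp only [ih, add_right_comm _ 1 q, ← add_assoc]
    exact sum_range_sum_mul_add_choose_add _ _ n (q + 1)

theorem stmt6 (n p q : ℕ) (hn : 0 < n) (hp : 0 < p) :
    hS p q n = ∑ j ∈ Finset.range (p+1),
      Nat.factorial j * stirling2 (p+1) (j+1) * (n+q).choose (j+q+1) :=
  stmt6_general n p q
end

section
/- For all positive integers n, p and nonnegative integers q: S_p^{(q)}(n) = sum_{j=1}^p (-1)^{p+j} * S(p,j) * binomial(n+q+j, q+j+1) * j!, where S(p,j) is the Stirling number of the second kind. -/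
open Finset

/-!
The falling-factorial expansion `x ^ p = ∑ S(p, j) x (x - 1) ⋯ (x - j + 1)`, evaluated at
`x = -(n + 1)`, gives `(n + 1) ^ p = ∑ (-1) ^ (p + j) S(p, j) j! C(n + j, j)`. Hence both sides
of the theorem, as functions of `(q, n)`, vanish at `n = 0` and satisfy the same recursions
`S_p^{(0)}(n + 1) = S_p^{(0)}(n) + (n + 1) ^ p` and
`S_p^{(q+1)}(n + 1) = S_p^{(q+1)}(n) + S_p^{(q)}(n + 1)`: on the right-hand side this is Pascal's rule for `C(n + q + j, q + j + 1)`, term by term.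
-/

open Polynomial

theorem stirling2_eq_stirlingSecond_s7 : stirling2 = Nat.stirlingSecond := by
  funext p j
  induction p generalizing j with
  | zero => cases j <;> rfl
  | succ p ih => cases j <;> simp [stirling2, Nat.stirlingSecond_succ_succ, ih]

theorem Polynomial.X_pow_eq_sum_stirlingSecond_mul_descPochhammer (R : Type*) [Ring R] (p : ℕ) :
    (X : R[X]) ^ p = ∑ j ∈ range (p + 1), (Nat.stirlingSecond p j : R[X]) * descPochhammer R j := by
  suffices
      (X : ℤ[X]) ^ p = ∑ j ∈ range (p + 1), (Nat.stirlingSecond p j : ℤ[X]) * descPochhammer ℤ j by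
    simpa [Polynomial.map_sum] using congrArg (map (Int.castRingHom R)) this
  induction p with
  | zero => simp
  | succ p ih =>
    have hX (j : ℕ) :
        X * descPochhammer ℤ j = descPochhammer ℤ (j + 1) + (j : ℤ[X]) * descPochhammer ℤ j := by
      rw [descPochhammer_succ_right]; ring
    have hshift : ∑ j ∈ range (p + 1), (j * Nat.stirlingSecond p j : ℤ[X]) * descPochhammer ℤ j =
        ∑ j ∈ range (p + 1),
          ((j + 1) * Nat.stirlingSecond p (j + 1) : ℤ[X]) * descPochhammer ℤ (j + 1) := by
      rw [sum_range_succ', sum_range_succ, Nat.stirlingSecond_eq_zero_of_lt p.lt_succ_self]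
      simp
    calc (X : ℤ[X]) ^ (p + 1)
        = ∑ j ∈ range (p + 1), (Nat.stirlingSecond p j : ℤ[X]) * (X * descPochhammer ℤ j) := by
          rw [pow_succ', ih, mul_sum]; exact sum_congr rfl fun j _ => by ring
      _ = ∑ j ∈ range (p + 1), (Nat.stirlingSecond p j : ℤ[X]) * descPochhammer ℤ (j + 1) +
          ∑ j ∈ range (p + 1), (j * Nat.stirlingSecond p j : ℤ[X]) * descPochhammer ℤ j := by
          rw [← sum_add_distrib]; exact sum_congr rfl fun j _ => by rw [hX]; ring
      _ = ∑ j ∈ range (p + 1 + 1), (Nat.stirlingSecond (p + 1) j : ℤ[X]) * descPochhammer ℤ j := by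
          rw [hshift, ← sum_add_distrib, sum_range_succ' _ (p + 1)]
          simp only [Nat.stirlingSecond_succ_succ, Nat.stirlingSecond_succ_zero]
          push_cast
          simp only [zero_mul, add_zero]
          exact sum_congr rfl fun j _ => by ring

theorem pow_eq_sum_stirlingSecond_mul_ascPochhammer {R : Type*} [CommRing R] (p : ℕ) (r : R) :
    r ^ p = ∑ j ∈ range (p + 1),
      (-1) ^ (p + j) * Nat.stirlingSecond p j * (ascPochhammer R j).eval r := by
  have h := congrArg (eval (-r)) (X_pow_eq_sum_stirlingSecond_mul_descPochhammer R p)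
  simp only [eval_pow, eval_X, eval_finsetSum, eval_mul, eval_natCast] at h
  have hdesc (j : ℕ) : (descPochhammer R j).eval (-r) = (-1) ^ j * (ascPochhammer R j).eval r := by
    rw [← neg_neg r, ascPochhammer_eval_neg_eq_descPochhammer, neg_neg, ← mul_assoc, ← mul_pow]
    simp
  calc r ^ p = (-1) ^ p * (-r) ^ p := by rw [← mul_pow]; simp
    _ = _ := by
      rw [h, mul_sum]
      exact sum_congr rfl fun j _ => by rw [hdesc, pow_add]; ring

theorem succ_pow_eq_sum_stirlingSecond_mul_choose (p n : ℕ) :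
    ((n : ℤ) + 1) ^ p = ∑ j ∈ range (p + 1),
      (-1 : ℤ) ^ (p + j) * Nat.stirlingSecond p j * ((n + j).choose j : ℤ) * j.factorial := by
  rw [pow_eq_sum_stirlingSecond_mul_ascPochhammer]
  refine sum_congr rfl fun j _ => ?_
  have hasc : (ascPochhammer ℤ j).eval ((n : ℤ) + 1) = ((n + j).choose j * j.factorial : ℕ) := by
    rw [← Nat.cast_succ, ← ascPochhammer_eval_cast, ascPochhammer_nat_eq_ascFactorial,
      Nat.ascFactorial_eq_factorial_mul_choose, mul_comm]
  rw [hasc]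
  push_cast
  ring

theorem hS_zero_right (p q : ℕ) : hS p q 0 = 0 := by
  cases q <;> rfl

theorem hS_zero_succ (p n : ℕ) : hS p 0 (n + 1) = hS p 0 n + (n + 1) ^ p :=
  sum_Icc_succ_top (by omega) _

theorem hS_succ_succ (p q n : ℕ) : hS p (q + 1) (n + 1) = hS p (q + 1) n + hS p q (n + 1) :=
  sum_Icc_succ_top (by omega) _

theorem hS_eq_sum_stirlingSecond (p q n : ℕ) :
    (hS p q n : ℤ) = ∑ j ∈ range (p + 1),
      (-1 : ℤ) ^ (p + j) * Nat.stirlingSecond p j * ((n + q + j).choose (q + j + 1) : ℤ) *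
        j.factorial := by
  induction n generalizing q with
  | zero => simp [hS_zero_right]
  | succ n ihn =>
    induction q with
    | zero =>
      rw [hS_zero_succ, Nat.cast_add, ihn, Nat.cast_pow, Nat.cast_succ,
        succ_pow_eq_sum_stirlingSecond_mul_choose, ← sum_add_distrib]
      refine sum_congr rfl fun j _ => ?_
      simp only [add_zero, zero_add]
      rw [show n + 1 + j = n + j + 1 by omega, Nat.choose_succ_succ']
      push_cast
      ring
    | succ q ihq =>
      rw [hS_succ_succ, Nat.cast_add, ihn, ihq, ← sum_add_distrib]
      refine sum_congr rfl fun j _ => ?_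
      rw [show n + 1 + (q + 1) + j = n + 1 + q + j + 1 by omega,
        show q + 1 + j + 1 = q + j + 1 + 1 by omega, Nat.choose_succ_succ' _ (q + j + 1),
        show n + (q + 1) + j = n + 1 + q + j by omega]
      push_cast
      ring

theorem stmt7_general (n p q : ℕ) (hp : 0 < p) :
    (hS p q n : ℤ) = ∑ j ∈ Finset.Icc 1 p,
      (-1:ℤ)^(p+j) * (stirling2 p j : ℤ) * ((n+q+j).choose (q+j+1) : ℤ) * (Nat.factorial j : ℤ) := by
  obtain ⟨p, rfl⟩ := Nat.exists_eq_add_one_of_ne_zero hp.ne'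
  rw [stirling2_eq_stirlingSecond_s7, hS_eq_sum_stirlingSecond, sum_range_eq_add_Ico _ (by omega)]
  simp [Ico_add_one_right_eq_Icc]

theorem stmt7 (n p q : ℕ) (hn : 0 < n) (hp : 0 < p) :
    (hS p q n : ℤ) = ∑ j ∈ Finset.Icc 1 p,
      (-1:ℤ)^(p+j) * (stirling2 p j : ℤ) * ((n+q+j).choose (q+j+1) : ℤ) * (Nat.factorial j : ℤ) :=
  stmt7_general n p q hp
end

section
/- For all positive integers n and p: S_p(n) = (1/2^p) * sum_{k=0}^{2n} (-1)^k * S_p(k), where S_p(m) = sum_{j=1}^m j^p is the sum of p-th powers. -/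
open Finset

theorem sum_range_two_mul_add_one_neg_one_pow_mul {R : Type*} [Ring R] (f : ℕ → R) (n : ℕ) :
    ∑ k ∈ range (2 * n + 1), (-1 : R) ^ k * f k =
      f 0 + ∑ k ∈ range n, (f (2 * k + 2) - f (2 * k + 1)) := by
  induction n with
  | zero => simp
  | succ n ih =>
    rw [show 2 * (n + 1) + 1 = 2 * n + 2 + 1 by ring, sum_range_succ, sum_range_succ, ih,
      sum_range_succ, (show Even (2 * n + 2) from ⟨n + 1, by ring⟩).neg_one_pow,
      (odd_two_mul_add_one n).neg_one_pow]
    simp only [one_mul, neg_one_mul]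
    abel

lemma hS_zero_eq_sum_range (p n : ℕ) : hS p 0 n = ∑ k ∈ range n, (k + 1) ^ p := by
  induction n with
  | zero => simp [hS]
  | succ n ih => rw [hS, sum_Icc_succ_top (Nat.le_add_left 1 n), ← hS, ih, sum_range_succ]

lemma sum_range_neg_one_pow_mul_hS (p n : ℕ) :
    ∑ k ∈ range (2 * n + 1), (-1 : ℚ) ^ k * (hS p 0 k : ℚ) = 2 ^ p * (hS p 0 n : ℚ) := by
  have hS_even_sub_odd (k : ℕ) :
      (hS p 0 (2 * k + 2) : ℚ) - hS p 0 (2 * k + 1) = 2 ^ p * (k + 1) ^ p := by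
    rw [hS_zero_eq_sum_range p (2 * k + 2), sum_range_succ, ← hS_zero_eq_sum_range, ← mul_pow]
    push_cast
    ring_nf
  rw [sum_range_two_mul_add_one_neg_one_pow_mul]
  simp only [hS_even_sub_odd, ← mul_sum]
  simp [hS_zero_eq_sum_range]

theorem stmt8_general (n p : ℕ) :
    (hS p 0 n : ℚ) = (1/2^p) * ∑ k ∈ Finset.range (2*n+1), (-1:ℚ)^k * (hS p 0 k : ℚ) := by
  rw [sum_range_neg_one_pow_mul_hS, one_div, inv_mul_cancel_left₀ (by positivity)]

theorem stmt8 (n p : ℕ) (hn : 0 < n) (hp : 0 < p) :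
    (hS p 0 n : ℚ) = (1/2^p) * ∑ k ∈ Finset.range (2*n+1), (-1:ℚ)^k * (hS p 0 k : ℚ) :=
  stmt8_general n p
end

section
/- For all positive integers n and q: sum_{j=1}^q ((-1)^j / j) * binomial(n, j) * binomial(n+q-j, n) = binomial(n+q, q) * (H_{n+q} - H_q - H_n), where H_m is the m-th harmonic number. -/
open Finset

/-!
Both sides vanish when `n = 0` or `q = 0`, and both satisfy the recurrence
`F (n+1) (q+1) = F (n+1) q + F n (q+1) - C(n+q+1, n) / (n+1)`.
For the closed form this is Pascal's rule together with `H_{m+1} = H_m + 1/(m+1)`.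
For the sum, Pascal's rule in both binomials and the absorption identity
`C(n, j-1) / j = C(n+1, j) / (n+1)` leave the correction term
`∑_{j ≥ 1} (-1)^j C(n+1, j) C(n+m-j, n) / (n+1)`, which equals `-C(n+m, n) / (n+1)` because
`∑_{j ≥ 0} (-1)^j C(n+1, j) C(n+m-j, n)` is the coefficient of `X^m` in
`(1 - X)^(n+1) (1 - X)^-(n+1) = 1`.
-/

open PowerSeries in
theorem PowerSeries.coeff_one_sub_X_pow (R : Type*) [CommRing R] (d i : ℕ) :
    coeff i ((1 - X : R⟦X⟧) ^ d) = (-1) ^ i * d.choose i := by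
  have h : (1 - X : R⟦X⟧) ^ d = rescale (-1) ((1 + Polynomial.X) ^ d : Polynomial R) := by
    simp [sub_eq_add_neg]
  rw [h, coeff_rescale, Polynomial.coeff_coe, Polynomial.coeff_one_add_X_pow]

open PowerSeries in
theorem sum_range_neg_one_pow_mul_choose_mul_choose {R : Type*} [CommRing R] (n m : ℕ) :
    ∑ j ∈ range (m + 1), (-1 : R) ^ j * (n + 1).choose j * (n + m - j).choose n
      = if m = 0 then 1 else 0 := by
  have h := congrArg (coeff m) (mk_add_choose_mul_one_sub_pow_eq_one R (d := n))
  rw [mul_comm, coeff_mul, Nat.sum_antidiagonal_eq_sum_range_succ fun i j ↦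
    coeff i ((1 - X : R⟦X⟧) ^ (n + 1)) * coeff j (mk fun k ↦ ((n + k).choose n : R))] at h
  rw [← coeff_one, ← h]
  refine sum_congr rfl fun j hj ↦ ?_
  rw [coeff_one_sub_X_pow, coeff_mk, Nat.add_sub_assoc (by simpa [Nat.lt_succ_iff] using hj)]

theorem sum_Icc_neg_one_pow_mul_choose_mul_choose {R : Type*} [CommRing R] {n m : ℕ}
    (hm : m ≠ 0) :
    ∑ j ∈ Icc 1 m, (-1 : R) ^ j * (n + 1).choose j * (n + m - j).choose n
      = -(n + m).choose n := by
  have h := sum_range_neg_one_pow_mul_choose_mul_choose (R := R) n m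
  rw [range_eq_Ico, sum_eq_sum_Ico_succ_bot m.succ_pos, zero_add, Nat.succ_eq_add_one,
    Ico_add_one_right_eq_Icc, if_neg hm] at h
  simpa [eq_neg_iff_add_eq_zero, add_comm] using h

theorem choose_succ_succ_div_succ {K : Type*} [Field K] [CharZero K] (n k : ℕ) :
    ((n + 1).choose (k + 1) : K) / (k + 1)
      = n.choose (k + 1) / (k + 1) + (n + 1).choose (k + 1) / (n + 1) := by
  have hpascal : ((n + 1).choose (k + 1) : K) = n.choose k + n.choose (k + 1) := by
    exact_mod_cast Nat.choose_succ_succ n k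
  have habsorb : ((n + 1 : ℕ) : K) * n.choose k = (n + 1).choose (k + 1) * (k + 1 : ℕ) := by
    exact_mod_cast Nat.add_one_mul_choose_eq n k
  push_cast at habsorb
  field_simp
  linear_combination (n + 1 : K) * hpascal + habsorb

theorem eq_of_pascal_recurrence {α : Type*} [Add α] {f g r : ℕ → ℕ → α}
    (hf : ∀ n q, f (n + 1) (q + 1) = f (n + 1) q + f n (q + 1) + r n q)
    (hg : ∀ n q, g (n + 1) (q + 1) = g (n + 1) q + g n (q + 1) + r n q)
    (h_left : ∀ q, f 0 q = g 0 q) (h_right : ∀ n, f n 0 = g n 0) : f = g := by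
  funext n q
  induction n generalizing q with
  | zero => exact h_left q
  | succ n ihn =>
    induction q with
    | zero => exact h_right (n + 1)
    | succ q ihq => rw [hf, hg, ihq, ihn]

def alternatingSum (n q : ℕ) : ℚ :=
  ∑ j ∈ Icc 1 q, (-1 : ℚ) ^ j / j * n.choose j * (n + q - j).choose n

def harmonicGap (n q : ℕ) : ℚ :=
  (n + q).choose q * (harmonic' (n + q) - harmonic' q - harmonic' n)

theorem harmonic'_succ (m : ℕ) : harmonic' (m + 1) = harmonic' m + 1 / (m + 1) :=
  sum_range_succ _ m

theorem alternatingSum_succ_succ (n q : ℕ) :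
    alternatingSum (n + 1) (q + 1)
      = alternatingSum (n + 1) q + alternatingSum n (q + 1)
        + -((n + q + 1).choose n / (n + 1)) := by
  have hsplit : ∀ j ∈ Icc 1 (q + 1),
      (-1 : ℚ) ^ j / j * (n + 1).choose j * (n + 1 + (q + 1) - j).choose (n + 1)
        = (-1 : ℚ) ^ j / j * (n + 1).choose j * (n + 1 + q - j).choose (n + 1)
          + (-1 : ℚ) ^ j / j * n.choose j * (n + (q + 1) - j).choose n
          + (-1 : ℚ) ^ j * (n + 1).choose j * (n + (q + 1) - j).choose n / (n + 1) := by
    intro j hj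
    obtain ⟨k, rfl⟩ : ∃ k, j = k + 1 := Nat.exists_eq_add_of_le' (mem_Icc.1 hj).1
    have hk : k ≤ q := by simpa using (mem_Icc.1 hj).2
    rw [show n + 1 + (q + 1) - (k + 1) = (n + 1 + q - (k + 1)) + 1 by omega,
      Nat.choose_succ_succ' (n + 1 + q - (k + 1)) n,
      show n + 1 + q - (k + 1) = n + (q + 1) - (k + 1) by omega]
    have := choose_succ_succ_div_succ (K := ℚ) n k
    simp only [Nat.cast_add, Nat.cast_one]
    linear_combination ((-1 : ℚ) ^ (k + 1) * ((n + (q + 1) - (k + 1)).choose n : ℚ)) * this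
  have htop : ((n + 1 + q - (q + 1)).choose (n + 1) : ℚ) = 0 := by
    rw [show n + 1 + q - (q + 1) = n by omega, Nat.choose_succ_self, Nat.cast_zero]
  have hvanish :=
    sum_Icc_neg_one_pow_mul_choose_mul_choose (R := ℚ) (n := n) (Nat.add_one_ne_zero q)
  rw [alternatingSum, sum_congr rfl hsplit, sum_add_distrib, sum_add_distrib, ← sum_div, hvanish,
    sum_Icc_succ_top (by omega), htop, mul_zero, add_zero, neg_div]
  rfl

theorem harmonicGap_succ_succ (n q : ℕ) :
    harmonicGap (n + 1) (q + 1)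
      = harmonicGap (n + 1) q + harmonicGap n (q + 1) + -((n + q + 1).choose n / (n + 1)) := by
  set N := n + q + 1 with hN
  have hpascal : ((N + 1).choose (q + 1) : ℚ) = N.choose q + N.choose (q + 1) := by
    exact_mod_cast Nat.choose_succ_succ N q
  have habsorb : ((N + 1).choose (q + 1) : ℚ) / (N + 1) = N.choose q / (q + 1) := by
    rw [div_eq_div_iff (by positivity) (by positivity)]
    exact_mod_cast (Nat.add_one_mul_choose_eq N q).symm.trans (mul_comm _ _)
  have hsymm : N.choose n = N.choose (q + 1) := by
    rw [hN, show n + q + 1 = n + (q + 1) by omega, Nat.choose_symm_add]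
  simp only [harmonicGap, show n + 1 + (q + 1) = N + 1 by omega, show n + 1 + q = N by omega,
    show n + (q + 1) = N by omega, harmonic'_succ N, harmonic'_succ q, harmonic'_succ n, hsymm]
  linear_combination
    (harmonic' N - harmonic' q - harmonic' n - 1 / (q + 1) - 1 / (n + 1)) * hpascal + habsorb

theorem alternatingSum_eq_harmonicGap : alternatingSum = harmonicGap := by
  refine eq_of_pascal_recurrence alternatingSum_succ_succ harmonicGap_succ_succ (fun q ↦ ?_)
    (fun n ↦ by simp [alternatingSum, harmonicGap, harmonic'])
  rw [harmonicGap, alternatingSum, sum_eq_zero fun j hj ↦ ?_]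
  · simp [harmonic']
  · rw [Nat.choose_eq_zero_of_lt (mem_Icc.1 hj).1, Nat.cast_zero, mul_zero, zero_mul]

theorem stmt10_general (n q : ℕ) :
    ∑ j ∈ Finset.Icc 1 q, ((-1:ℚ)^j / (j:ℚ)) * (n.choose j : ℚ) * ((n+q-j).choose n : ℚ)
      = ((n+q).choose q : ℚ) * (harmonic' (n+q) - harmonic' q - harmonic' n) :=
  congrFun (congrFun alternatingSum_eq_harmonicGap n) q

theorem stmt10 (n q : ℕ) (hn : 0 < n) (hq : 0 < q) :
    ∑ j ∈ Finset.Icc 1 q, ((-1:ℚ)^j / (j:ℚ)) * (n.choose j : ℚ) * ((n+q-j).choose n : ℚ)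
      = ((n+q).choose q : ℚ) * (harmonic' (n+q) - harmonic' q - harmonic' n) :=
  stmt10_general n q
end

section
/- For all nonnegative integers n, p, q: B_n^{(-p)}(q) = sum_{j=0}^{min(n,p)} (j!)^2 * S(p+1, j+1) * S_{q+1}(n+q+1, j+q+1), where S(a,b) is the Stirling number of the second kind and S_r(a+r, b+r) denotes the r-Stirling number of the second kind. -/
open Finset

/-!
Expanding `j! S(j, m)` in `B_j^{(-p)}` by the alternating-sum formula and summing the binomial
convolution over `j` gives `B_n^{(-p)}(q) = ∑ₘ (m + 1)^p gₘ` with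
`gₘ = ∑ᵢ (-1)^i C(m, i) (q - i)^n`. Since `(m + 1)^p = ∑ⱼ j! S(p + 1, j + 1) C(m, j)`, it remains
to see that `∑ₘ C(m, j) gₘ = j! S_{q+1}(n + q + 1, j + q + 1)`; both sides satisfy the
recurrence of the `(q + 1)`-Stirling numbers in `n`. The alternating-sum formula itself is the
statement that `j! S_r(n + r, j + r)` are the Newton coefficients of `x ↦ (x + r)^n`, read off
from `(x + r)^n = ∑ₖ S_r(n + r, k + r) x(x - 1)⋯(x - k + 1)`.
-/

open scoped Nat fwdDiff

theorem rstirling2_eq_zero_of_lt (r : ℕ) : ∀ {n k : ℕ}, n < k → rstirling2 r n k = 0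
  | 0, _ + 1, _ => rfl
  | n + 1, k + 1, h => by
    rw [rstirling2, rstirling2_eq_zero_of_lt r (by omega), rstirling2_eq_zero_of_lt r (by omega)]
    rfl

theorem stirling2_eq_rstirling2_zero : ∀ n k : ℕ, stirling2 n k = rstirling2 0 n k
  | 0, 0 | 0, _ + 1 => rfl
  | n + 1, 0 => by rw [stirling2, rstirling2, zero_mul]
  | n + 1, k + 1 => by
    rw [stirling2, rstirling2, stirling2_eq_rstirling2_zero n, stirling2_eq_rstirling2_zero n,
      add_zero]

theorem stirling2_succ_succ_eq_rstirling2_one :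
    ∀ n k : ℕ, stirling2 (n + 1) (k + 1) = rstirling2 1 n k
  | 0, 0 | 0, _ + 1 => rfl
  | n + 1, 0 => by
    rw [stirling2, stirling2_succ_succ_eq_rstirling2_one n, rstirling2, stirling2]
    ring
  | n + 1, k + 1 => by
    rw [stirling2, rstirling2, stirling2_succ_succ_eq_rstirling2_one n,
      stirling2_succ_succ_eq_rstirling2_one n]

theorem add_mul_descFactorial (x r k : ℕ) :
    (x + r) * x.descFactorial k = x.descFactorial (k + 1) + (k + r) * x.descFactorial k := by
  rcases le_or_gt k x with hk | hk
  · rw [Nat.descFactorial_succ]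
    nth_rw 1 [← Nat.sub_add_cancel hk]
    ring
  · rw [Nat.descFactorial_eq_zero_iff_lt.2 hk, Nat.descFactorial_eq_zero_iff_lt.2 (by omega)]
    simp

theorem add_pow_eq_sum_rstirling2_mul_descFactorial (r x : ℕ) : ∀ n : ℕ,
    (x + r) ^ n = ∑ k ∈ range (n + 1), rstirling2 r n k * x.descFactorial k
  | 0 => by simp [rstirling2]
  | n + 1 => by
    have hshift : ∑ k ∈ range (n + 1), (k + r) * rstirling2 r n k * x.descFactorial k
        = r * rstirling2 r n 0 + ∑ k ∈ range (n + 1),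
          (k + 1 + r) * rstirling2 r n (k + 1) * x.descFactorial (k + 1) := by
      rw [sum_range_succ' _ n, sum_range_succ _ n, rstirling2_eq_zero_of_lt r (Nat.lt_succ_self n)]
      simp only [mul_zero, zero_mul, add_zero, Nat.descFactorial_zero, mul_one]
      ring
    calc (x + r) ^ (n + 1)
        = ∑ k ∈ range (n + 1), rstirling2 r n k * ((x + r) * x.descFactorial k) := by
          rw [pow_succ', add_pow_eq_sum_rstirling2_mul_descFactorial r x n, mul_sum]
          exact sum_congr rfl fun k _ => by ring
      _ = ∑ k ∈ range (n + 1), rstirling2 r n k * x.descFactorial (k + 1)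
            + ∑ k ∈ range (n + 1), (k + r) * rstirling2 r n k * x.descFactorial k := by
          rw [← sum_add_distrib]
          exact sum_congr rfl fun k _ => by rw [add_mul_descFactorial]; ring
      _ = ∑ k ∈ range (n + 2), rstirling2 r (n + 1) k * x.descFactorial k := by
          rw [hshift, sum_range_succ' _ (n + 1), add_left_comm, ← sum_add_distrib]
          simp only [rstirling2, Nat.descFactorial_zero]
          rw [add_comm]
          congr 1
          · exact sum_congr rfl fun k _ => by ring
          · ring

theorem fwdDiff_iter_eq_of_eq_sum_mul_choose {f c : ℕ → ℤ} {N : ℕ}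
    (hf : ∀ x, f x = ∑ k ∈ range N, c k * x.choose k) (j : ℕ) :
    Δ_[1] ^[j] f 0 = if j < N then c j else 0 := by
  have hf' : f = ∑ k ∈ range N, c k • fun x : ℕ => (x.choose k : ℤ) := by
    ext x
    simp [hf]
  rw [hf', fwdDiff_iter_finsetSum, Finset.sum_apply]
  simp only [fwdDiff_iter_const_smul, Pi.smul_apply, fwdDiff_iter_choose_zero, smul_eq_mul,
    mul_ite, mul_one, mul_zero, sum_ite_eq, mem_range]

theorem factorial_mul_rstirling2_eq_sum (r n j : ℕ) :
    (j ! * rstirling2 r n j : ℤ)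
      = ∑ i ∈ range (j + 1), (-1) ^ (j - i) * j.choose i * ((i : ℤ) + r) ^ n := by
  have hexpand : ∀ x : ℕ, ((x : ℤ) + r) ^ n
      = ∑ k ∈ range (n + 1), (k ! * rstirling2 r n k : ℤ) * x.choose k := fun x => by
    exact_mod_cast (add_pow_eq_sum_rstirling2_mul_descFactorial r x n).trans
      (sum_congr rfl fun k _ => by rw [Nat.descFactorial_eq_factorial_mul_choose]; ring)
  have h := fwdDiff_iter_eq_of_eq_sum_mul_choose hexpand j
  rw [fwdDiff_iter_eq_sum_shift] at h
  simp only [smul_eq_mul, zero_add, mul_one] at h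
  split_ifs at h with hj
  · rw [← h]
  · rw [rstirling2_eq_zero_of_lt r (by omega), Nat.cast_zero, mul_zero, h]

theorem neg_one_pow_mul_factorial_mul_stirling2 (j m : ℕ) :
    (-1) ^ m * (m ! * stirling2 j m : ℤ)
      = ∑ i ∈ range (m + 1), (-1) ^ i * m.choose i * (i : ℤ) ^ j := by
  rw [stirling2_eq_rstirling2_zero, factorial_mul_rstirling2_eq_sum, mul_sum]
  refine sum_congr rfl fun i hi => ?_
  obtain ⟨d, rfl⟩ := Nat.exists_eq_add_of_le (mem_range_succ_iff.1 hi)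
  have hsq : ((-1 : ℤ) ^ d) * (-1) ^ d = 1 := by rw [← mul_pow]; norm_num
  rw [Nat.add_sub_cancel_left, pow_add]
  push_cast
  linear_combination (-1 : ℤ) ^ i * (i + d).choose i * (i : ℤ) ^ j * hsq

/-- `(-1)^m Δ^m` of `x ↦ (q - x)^n` at `0`. -/
def altChooseSum (q n m : ℕ) : ℤ :=
  ∑ i ∈ range (m + 1), (-1) ^ i * m.choose i * ((q : ℤ) - i) ^ n

theorem altChooseSum_succ (q n m : ℕ) :
    altChooseSum q (n + 1) m = (q - m) * altChooseSum q n m + m * altChooseSum q n (m - 1) := by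
  rcases m with _ | m
  · simp [altChooseSum, pow_succ']
  have hchoose : ∀ i ∈ range (m + 2),
      ((m + 1 - i : ℤ)) * (m + 1).choose i = (m + 1) * m.choose i := by
    intro i hi
    have := Nat.choose_mul_succ_eq m i
    rw [← Nat.cast_inj (R := ℤ)] at this
    push_cast [Nat.cast_sub (mem_range_succ_iff.1 hi)] at this
    linarith
  have htop : ∑ i ∈ range (m + 2), (-1) ^ i * m.choose i * ((q : ℤ) - i) ^ n
      = altChooseSum q n m := by
    rw [sum_range_succ, Nat.choose_succ_self, Nat.cast_zero, mul_zero, zero_mul, add_zero]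
    rfl
  rw [add_tsub_cancel_right, ← htop]
  unfold altChooseSum
  rw [mul_sum, mul_sum, ← sum_add_distrib]
  refine sum_congr rfl fun i hi => ?_
  push_cast
  linear_combination (-1 : ℤ) ^ i * ((q : ℤ) - i) ^ n * hchoose i hi

theorem altChooseSum_eq_zero_of_lt (q : ℕ) : ∀ {n m : ℕ}, n < m → altChooseSum q n m = 0
  | 0, m + 1, _ => by
    simpa [altChooseSum] using Int.alternating_sum_range_choose_of_ne (Nat.succ_ne_zero m)
  | n + 1, m + 1, h => by
    rw [altChooseSum_succ, altChooseSum_eq_zero_of_lt q (by omega : n < m + 1),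
      altChooseSum_eq_zero_of_lt q (by omega : n < m + 1 - 1), mul_zero, mul_zero, add_zero]

theorem polyBP_eq_sum_pow_mul_altChooseSum (p n q : ℕ) :
    polyBP p n q = ∑ m ∈ range (n + 1), ((m : ℤ) + 1) ^ p * altChooseSum q n m := by
  have hBN : ∀ j ∈ range (n + 1), polyBN p j = ∑ m ∈ range (n + 1),
      ((m : ℤ) + 1) ^ p * ∑ i ∈ range (m + 1), (-1) ^ i * m.choose i * (-(i : ℤ)) ^ j := by
    intro j hj
    have hsub : range (j + 1) ⊆ range (n + 1) := range_subset_range.2 (mem_range.1 hj)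
    rw [polyBN, mul_sum, sum_subset hsub fun m _ hm => by
      rw [stirling2_eq_rstirling2_zero, rstirling2_eq_zero_of_lt 0 (by simpa using hm)]; simp]
    refine sum_congr rfl fun m _ => ?_
    have hneg : ∑ i ∈ range (m + 1), (-1) ^ i * m.choose i * (-(i : ℤ)) ^ j
        = (-1) ^ j * ((-1) ^ m * (m ! * stirling2 j m)) := by
      rw [neg_one_pow_mul_factorial_mul_stirling2, mul_sum]
      exact sum_congr rfl fun i _ => by rw [neg_pow]; ring
    rw [hneg]
    ring
  have hbinom : ∀ i : ℕ, ((q : ℤ) - i) ^ n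
      = ∑ j ∈ range (n + 1), (n.choose j : ℤ) * (-(i : ℤ)) ^ j * (q : ℤ) ^ (n - j) := by
    intro i
    rw [sub_eq_neg_add, add_pow]
    exact sum_congr rfl fun j _ => by ring
  rw [polyBP, sum_congr rfl fun j hj => by rw [hBN j hj]]
  simp only [altChooseSum, hbinom, mul_sum, sum_mul]
  rw [sum_comm]
  refine sum_congr rfl fun m _ => ?_
  rw [sum_comm]
  exact sum_congr rfl fun i _ => sum_congr rfl fun j _ => by ring

theorem sum_choose_mul_altChooseSum_succ (q n j : ℕ) :
    ∑ m ∈ range (n + 2), (m.choose j : ℤ) * altChooseSum q (n + 1) m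
      = ∑ m ∈ range (n + 1),
          ((q - m) * m.choose j + (m + 1) * (m + 1).choose j) * altChooseSum q n m := by
  have hlast : ∑ m ∈ range (n + 2), (m.choose j : ℤ) * ((q - m) * altChooseSum q n m)
      = ∑ m ∈ range (n + 1), (m.choose j : ℤ) * ((q - m) * altChooseSum q n m) := by
    rw [sum_range_succ, altChooseSum_eq_zero_of_lt q (Nat.lt_succ_self n), mul_zero, mul_zero,
      add_zero]
  have hshift : ∑ m ∈ range (n + 2), (m.choose j : ℤ) * (m * altChooseSum q n (m - 1))
      = ∑ m ∈ range (n + 1), ((m + 1).choose j : ℤ) * ((m + 1) * altChooseSum q n m) := by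
    rw [sum_range_succ']
    simp
  simp only [altChooseSum_succ, mul_add, sum_add_distrib, hlast, hshift]
  rw [← sum_add_distrib]
  exact sum_congr rfl fun m _ => by ring

theorem sum_choose_mul_altChooseSum (q : ℕ) : ∀ n j : ℕ,
    ∑ m ∈ range (n + 1), (m.choose j : ℤ) * altChooseSum q n m = j ! * rstirling2 (q + 1) n j
  | 0, 0 => by simp [altChooseSum, rstirling2]
  | 0, j + 1 => by simp [altChooseSum, rstirling2]
  | n + 1, 0 => by
    have ih := sum_choose_mul_altChooseSum q n 0
    rw [Nat.factorial_zero, Nat.cast_one, one_mul] at ih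
    rw [sum_choose_mul_altChooseSum_succ, rstirling2, Nat.factorial_zero, Nat.cast_one, one_mul,
      Nat.cast_mul, ← ih, mul_sum]
    exact sum_congr rfl fun m _ => by simp only [Nat.choose_zero_right]; push_cast; ring
  | n + 1, j + 1 => by
    have hchoose : ∀ m : ℕ, ((m : ℤ) + 1) * (m + 1).choose (j + 1)
        = (m + j + 2) * m.choose (j + 1) + (j + 1) * m.choose j := by
      intro m
      have hpascal := Nat.choose_succ_succ' m j
      have habsorb := Nat.add_one_mul_choose_eq m j
      rw [← Nat.cast_inj (R := ℤ)] at hpascal habsorb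
      push_cast at hpascal habsorb
      linear_combination ((m : ℤ) + j + 2) * hpascal + habsorb
    have hrec : (((j + 1) ! * rstirling2 (q + 1) (n + 1) (j + 1) : ℕ) : ℤ)
        = (j + q + 2) * ((j + 1) ! * rstirling2 (q + 1) n (j + 1))
          + (j + 1) * (j ! * rstirling2 (q + 1) n j) := by
      rw [rstirling2, Nat.factorial_succ]
      push_cast
      ring
    rw [sum_choose_mul_altChooseSum_succ, ← Nat.cast_mul, hrec,
      ← sum_choose_mul_altChooseSum q n (j + 1), ← sum_choose_mul_altChooseSum q n j,
      mul_sum, mul_sum, ← sum_add_distrib]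
    refine sum_congr rfl fun m _ => ?_
    linear_combination altChooseSum q n m * hchoose m

theorem stmt12 (n p q : ℕ) :
    polyBP p n q = ∑ j ∈ Finset.range (min n p + 1),
      ((Nat.factorial j : ℤ))^2 * (stirling2 (p+1) (j+1) : ℤ) * (rstirling2 (q+1) n j : ℤ) := by
  have hpow : ∀ m : ℕ, ((m : ℤ) + 1) ^ p
      = ∑ j ∈ range (p + 1), (j ! * stirling2 (p + 1) (j + 1) : ℤ) * m.choose j := fun m => by
    exact_mod_cast (add_pow_eq_sum_rstirling2_mul_descFactorial 1 m p).trans <| sum_congr rfl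
      fun j _ => by
        rw [stirling2_succ_succ_eq_rstirling2_one, Nat.descFactorial_eq_factorial_mul_choose]; ring
  have htrunc : range (min n p + 1) ⊆ range (p + 1) := range_subset_range.2 (by omega)
  calc polyBP p n q = ∑ m ∈ range (n + 1), ((m : ℤ) + 1) ^ p * altChooseSum q n m :=
        polyBP_eq_sum_pow_mul_altChooseSum p n q
    _ = ∑ j ∈ range (p + 1), (j ! * stirling2 (p + 1) (j + 1) : ℤ)
          * ∑ m ∈ range (n + 1), (m.choose j : ℤ) * altChooseSum q n m := by
        simp only [hpow, sum_mul, mul_sum]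
        rw [sum_comm]
        exact sum_congr rfl fun j _ => sum_congr rfl fun m _ => by ring
    _ = ∑ j ∈ range (p + 1), (j ! : ℤ) ^ 2 * stirling2 (p + 1) (j + 1) * rstirling2 (q + 1) n j :=
        sum_congr rfl fun j _ => by rw [sum_choose_mul_altChooseSum]; ring
    _ = _ := (sum_subset htrunc fun j hjp hjmin => by
        rw [mem_range] at hjp hjmin
        rw [rstirling2_eq_zero_of_lt (q + 1) (by omega), Nat.cast_zero, mul_zero]).symm
end

section
/- For all nonnegative integers n and p: (1/n!) * sum_{k=0}^n |s(n+1, k+1)| * B_p^{(-k)} = S_p(n+1), where |s(n+1,k+1)| is the unsigned Stirling number of the first kind, B_p^{(-k)} is the poly-Bernoulli number of negative index, and S_p(m) = sum_{j=1}^m j^p. -/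
/-!
Write `B_p^{(-k)} = ∑_m (-1)^(p+m) S(p,m) m! (m+1)^k` and sum over `k` first. The generating
function `∑_k |s(n+1,k+1)| x^k = (x+1)(x+2)⋯(x+n)` at `x = m+1` gives
`m! (m+2)⋯(m+n+1) = n! ∑_{j=1}^{n+1} j(j+1)⋯(j+m-1)`, the sum of rising factorials telescoping.
Exchanging the sums once more, `∑_m (-1)^(p+m) S(p,m) j(j+1)⋯(j+m-1) = j^p` is the expansion of
`(-j)^p` in falling factorials.
-/

open Finset

open Polynomial Nat

theorem stirling2_eq_stirlingSecond_s13 : ∀ p m, stirling2 p m = stirlingSecond p m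
  | 0, 0 | 0, _ + 1 | _ + 1, 0 => rfl
  | p + 1, m + 1 => by
    rw [stirling2, stirlingSecond_succ_succ, stirling2_eq_stirlingSecond_s13 p (m + 1),
      stirling2_eq_stirlingSecond_s13 p m]

theorem rstirling1_zero_eq_stirlingFirst : ∀ n k, rstirling1 0 n k = stirlingFirst n k
  | 0, 0 | 0, _ + 1 | 1, 0 => rfl
  | n + 2, 0 => by rw [rstirling1, rstirling1_zero_eq_stirlingFirst (n + 1) 0]; simp
  | n + 1, k + 1 => by
    rw [rstirling1, stirlingFirst_succ_succ, rstirling1_zero_eq_stirlingFirst n (k + 1),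
      rstirling1_zero_eq_stirlingFirst n k, Nat.add_zero]

theorem sum_stirlingFirst_succ_mul_pow {R : Type*} [CommSemiring R] (n : ℕ) (x : R) :
    ∑ k ∈ range (n + 1), (stirlingFirst (n + 1) (k + 1) : R) * x ^ k =
      (ascPochhammer R n).eval (x + 1) := by
  induction n with
  | zero => simp [stirlingFirst_succ_succ]
  | succ n ih =>
    set f : ℕ → R := fun k => (stirlingFirst (n + 1) (k + 1) : R) * x ^ k with hf
    have hlow : ∑ k ∈ range (n + 2), (stirlingFirst (n + 1) k : R) * x ^ k =
        x * ∑ k ∈ range (n + 1), f k := by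
      rw [sum_range_succ', mul_sum]
      simp [hf, pow_succ, mul_comm, mul_assoc]
    have htop : ∑ k ∈ range (n + 2), f k = ∑ k ∈ range (n + 1), f k := by
      rw [sum_range_succ]
      simp [hf, stirlingFirst_eq_zero_of_lt]
    calc ∑ k ∈ range (n + 2), (stirlingFirst (n + 2) (k + 1) : R) * x ^ k
        = (n + 1) * ∑ k ∈ range (n + 2), f k
            + ∑ k ∈ range (n + 2), (stirlingFirst (n + 1) k : R) * x ^ k := by
          rw [mul_sum, ← sum_add_distrib]
          refine sum_congr rfl fun k _ => ?_
          rw [stirlingFirst_succ_succ]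
          push_cast
          ring
      _ = (ascPochhammer R (n + 1)).eval (x + 1) := by
          rw [htop, hlow, ih, ascPochhammer_succ_eval]
          ring

theorem pow_eq_sum_stirlingSecond_mul_descPochhammer {R : Type*} [CommRing R] (p : ℕ) (x : R) :
    x ^ p = ∑ m ∈ range (p + 1), (stirlingSecond p m : R) * (descPochhammer R m).eval x := by
  induction p with
  | zero => simp
  | succ p ih =>
    set g : ℕ → R := fun m => (stirlingSecond p m : R) * (descPochhammer R m).eval x with hg
    have hshift : ∑ m ∈ range (p + 2), (m : R) * g m =
        ∑ m ∈ range (p + 1), ((m : R) + 1) * g (m + 1) := by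
      rw [sum_range_succ']
      simp
    have htop : ∑ m ∈ range (p + 2), (m : R) * g m = ∑ m ∈ range (p + 1), (m : R) * g m := by
      rw [sum_range_succ]
      simp [hg, stirlingSecond_eq_zero_of_lt]
    calc x ^ (p + 1) = ∑ m ∈ range (p + 1), (g m * (x - m) + m * g m) := by
          rw [pow_succ, ih, sum_mul]
          refine sum_congr rfl fun m _ => ?_
          ring
      _ = ∑ m ∈ range (p + 1),
            (stirlingSecond p m : R) * (descPochhammer R (m + 1)).eval x
            + ∑ m ∈ range (p + 1), ((m : R) + 1) * g (m + 1) := by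
          rw [sum_add_distrib, ← htop, hshift]
          simp only [hg, descPochhammer_succ_eval, mul_assoc]
      _ = ∑ m ∈ range (p + 2), (stirlingSecond (p + 1) m : R) * (descPochhammer R m).eval x := by
          rw [sum_range_succ' _ (p + 1), ← sum_add_distrib]
          simp only [stirlingSecond_succ_succ, stirlingSecond_succ_zero, hg]
          push_cast
          simp only [zero_mul, add_zero]
          refine sum_congr rfl fun m _ => ?_
          ring

theorem neg_pow_eq_sum_stirlingSecond_mul_ascPochhammer {R : Type*} [CommRing R] (p : ℕ)
    (x : R) : (-x) ^ p =
      ∑ m ∈ range (p + 1), (stirlingSecond p m : R) * (-1) ^ m * (ascPochhammer R m).eval x := by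
  rw [pow_eq_sum_stirlingSecond_mul_descPochhammer]
  refine sum_congr rfl fun m _ => ?_
  rw [← neg_neg x, ascPochhammer_eval_neg_eq_descPochhammer, neg_neg, mul_assoc,
    ← mul_assoc ((-1 : R) ^ m), ← mul_pow]
  simp

theorem Nat.succ_mul_sum_Icc_ascFactorial (m : ℕ) : ∀ N,
    (m + 1) * ∑ j ∈ Icc 1 N, j.ascFactorial m = N.ascFactorial (m + 1)
  | 0 => by simp [zero_ascFactorial]
  | N + 1 => by
    rw [sum_Icc_succ_top (by omega), mul_add, Nat.succ_mul_sum_Icc_ascFactorial m N,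
      ascFactorial_succ, ← succ_ascFactorial, ascFactorial_succ]
    ring

theorem Nat.factorial_mul_sum_Icc_ascFactorial (n m : ℕ) :
    n ! * ∑ j ∈ Icc 1 (n + 1), j.ascFactorial m = m ! * (m + 2).ascFactorial n := by
  refine Nat.eq_of_mul_eq_mul_left m.succ_pos ?_
  calc (m + 1) * (n ! * ∑ j ∈ Icc 1 (n + 1), j.ascFactorial m)
      = n ! * (n + 1).ascFactorial (m + 1) := by
        rw [mul_left_comm, Nat.succ_mul_sum_Icc_ascFactorial]
    _ = (m + 1)! * (m + 1 + 1).ascFactorial n := by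
        rw [factorial_mul_ascFactorial, factorial_mul_ascFactorial, Nat.add_comm]
    _ = (m + 1) * (m ! * (m + 2).ascFactorial n) := by
        rw [factorial_succ, mul_assoc]

theorem sum_stirlingFirst_mul_polyBN (n p : ℕ) :
    ∑ k ∈ range (n + 1), (stirlingFirst (n + 1) (k + 1) : ℤ) * polyBN k p =
      n ! * ∑ j ∈ Icc 1 (n + 1), (j : ℤ) ^ p := by
  set c : ℕ → ℤ := fun m => (-1) ^ p * ((stirlingSecond p m : ℤ) * (-1) ^ m) with hc
  have hpoly : ∀ k, polyBN k p = ∑ m ∈ range (p + 1), c m * m ! * ((m : ℤ) + 1) ^ k := by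
    intro k
    simp only [polyBN, stirling2_eq_stirlingSecond_s13, mul_sum, hc]
    refine sum_congr rfl fun m _ => ?_
    ring
  have hpow : ∀ j : ℕ, ∑ m ∈ range (p + 1), c m * (j.ascFactorial m : ℤ) = (j : ℤ) ^ p := by
    intro j
    calc ∑ m ∈ range (p + 1), c m * (j.ascFactorial m : ℤ)
        = (-1) ^ p * ∑ m ∈ range (p + 1),
            (stirlingSecond p m : ℤ) * (-1) ^ m * (ascPochhammer ℤ m).eval (j : ℤ) := by
          rw [mul_sum]
          refine sum_congr rfl fun m _ => ?_
          rw [ascPochhammer_nat_eq_natCast_ascFactorial, hc, mul_assoc]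
      _ = (j : ℤ) ^ p := by
          rw [← neg_pow_eq_sum_stirlingSecond_mul_ascPochhammer, ← mul_pow]
          simp
  calc ∑ k ∈ range (n + 1), (stirlingFirst (n + 1) (k + 1) : ℤ) * polyBN k p
      = ∑ m ∈ range (p + 1), c m * (m ! * (m + 2).ascFactorial n : ℕ) := by
        simp only [hpoly, mul_sum]
        rw [sum_comm]
        refine sum_congr rfl fun m _ => ?_
        rw [Nat.cast_mul, ← ascPochhammer_nat_eq_natCast_ascFactorial, Nat.cast_add, Nat.cast_two,
          show (m : ℤ) + 2 = (m + 1) + 1 by ring, ← sum_stirlingFirst_succ_mul_pow, mul_sum,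
          mul_sum]
        refine sum_congr rfl fun k _ => ?_
        ring
    _ = n ! * ∑ j ∈ Icc 1 (n + 1), ∑ m ∈ range (p + 1), c m * (j.ascFactorial m : ℤ) := by
        simp only [← Nat.factorial_mul_sum_Icc_ascFactorial]
        push_cast
        simp only [mul_sum]
        rw [sum_comm]
        refine sum_congr rfl fun j _ => sum_congr rfl fun m _ => ?_
        ring
    _ = n ! * ∑ j ∈ Icc 1 (n + 1), (j : ℤ) ^ p := by
        simp only [hpow]

theorem stmt13 (n p : ℕ) :
    (1/(Nat.factorial n : ℚ)) * ∑ k ∈ Finset.range (n+1),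
      (rstirling1 0 (n+1) (k+1) : ℚ) * (polyBN k p : ℚ) = (hS p 0 (n+1) : ℚ) := by
  have h := congrArg (Int.cast : ℤ → ℚ) (sum_stirlingFirst_mul_polyBN n p)
  push_cast at h
  simp only [rstirling1_zero_eq_stirlingFirst, hS, Nat.cast_sum, Nat.cast_pow, h]
  field_simp
end

section
/- For all positive integers n, q with q ≤ n: the sum of powers satisfies S_q(n) = sum_{k=0}^q (-1)^k * S_{n+1}(q+n+1, k+n+1) * binomial(k+n, k+1) * k!, where S_r(a+r, b+r) is the r-Stirling number of the second kind with r = n+1. -/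
open Finset

/-! The identity is the case `m = 0` of a two-parameter one. For fixed `n` put
`P(q, m) = ∑_{i<n} C(i+m, m) (i+1)^q` and
`B(q, m) = ∑_k (-1)^k S_{n+1}(q, k) k! C(k+n+m, k+m+1)`.
Both agree with `C(n+m, m+1)` at `q = 0` (hockey stick), and both satisfy
`F(q+1, m) = (m+1) F(q, m+1) - m F(q, m)`: for `P` this is `(i+1) C(i+m, m) = (m+1) C(i+m+1, m+1) - m C(i+m, m)`;
for `B`, summation by parts against the recurrence `S_r(q+1, k) = (k+r) S_r(q, k) + S_r(q, k-1)`
reduces it to `(N+1) C(N, j) = (j+1) C(N+1, j+1)`. -/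

open Nat

theorem rstirling2_eq_zero_of_lt_s14 (r : ℕ) {q k : ℕ} (h : q < k) : rstirling2 r q k = 0 := by
  induction q generalizing k with
  | zero =>
    obtain ⟨k, rfl⟩ := Nat.exists_eq_succ_of_ne_zero (by omega : k ≠ 0)
    rfl
  | succ q ih =>
    obtain ⟨k, rfl⟩ := Nat.exists_eq_succ_of_ne_zero (by omega : k ≠ 0)
    simp [rstirling2, ih (by omega : q < k + 1), ih (by omega : q < k)]

section RStirlingTransform

variable {R : Type*} [CommRing R] (r : ℕ)

def rstirlingTransform (q : ℕ) (w : ℕ → R) : R :=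
  ∑ k ∈ range (q + 1), (-1) ^ k * (rstirling2 r q k : R) * (k ! : R) * w k

theorem rstirlingTransform_zero (w : ℕ → R) : rstirlingTransform r 0 w = w 0 := by
  simp [rstirlingTransform, rstirling2]

theorem rstirlingTransform_succ (q : ℕ) (w : ℕ → R) :
    rstirlingTransform r (q + 1) w =
      rstirlingTransform r q (fun k => (k + r) * w k - (k + 1) * w (k + 1)) := by
  set a : ℕ → R := fun k => (-1) ^ k * (rstirling2 r q k : R) * (k ! : R)
  have hlast : a (q + 1) = 0 := by simp [a, rstirling2_eq_zero_of_lt_s14 r (Nat.lt_succ_self q)]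
  have hsucc : ∀ k, (-1) ^ (k + 1) * (rstirling2 r (q + 1) (k + 1) : R) * ((k + 1) ! : R) * w (k + 1)
      = a (k + 1) * ((↑(k + 1) + r) * w (k + 1)) - a k * ((k + 1) * w (k + 1)) := by
    intro k
    simp only [a, rstirling2, Nat.factorial_succ]
    push_cast
    ring
  have hzero : (-1) ^ 0 * (rstirling2 r (q + 1) 0 : R) * ((0 : ℕ) ! : R) * w 0
      = a 0 * ((↑(0 : ℕ) + r) * w 0) := by
    simp only [pow_zero, rstirling2, cast_mul, one_mul, factorial_zero, cast_one, mul_one, cast_zero,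
      zero_add, a]
    ring
  calc rstirlingTransform r (q + 1) w
      = ∑ k ∈ range (q + 2), a k * ((k + r) * w k)
          - ∑ k ∈ range (q + 1), a k * ((k + 1) * w (k + 1)) := by
        rw [rstirlingTransform, sum_range_succ', sum_range_succ' (fun k => a k * ((k + r) * w k))]
        simp only [hsucc, hzero, sum_sub_distrib]
        ring
    _ = _ := by
        rw [sum_range_succ, hlast, zero_mul, add_zero, ← sum_sub_distrib]
        simp only [rstirlingTransform, a, mul_sub, mul_assoc]

theorem rstirlingTransform_linear (q : ℕ) (a b : R) (f g : ℕ → R) :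
    rstirlingTransform r q (fun k => a * f k - b * g k) =
      a * rstirlingTransform r q f - b * rstirlingTransform r q g := by
  simp only [rstirlingTransform, mul_sum, ← sum_sub_distrib]
  exact sum_congr rfl fun k _ => by ring

end RStirlingTransform

section BinomialSums

variable (n : ℕ)

def binomPowerSum (q m : ℕ) : ℤ :=
  ∑ i ∈ range n, ((i + m).choose m : ℤ) * ((i : ℤ) + 1) ^ q

def binomRStirlingSum (q m : ℕ) : ℤ :=
  rstirlingTransform (n + 1) q (fun k => ((k + n + m).choose (k + m + 1) : ℤ))

theorem binomPowerSum_zero (m : ℕ) : binomPowerSum n 0 m = (n + m).choose (m + 1) := by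
  cases n with
  | zero => simp [binomPowerSum]
  | succ n => simp [binomPowerSum, ← Nat.cast_sum, Nat.sum_range_add_choose, add_right_comm]

theorem binomRStirlingSum_zero (m : ℕ) : binomRStirlingSum n 0 m = (n + m).choose (m + 1) := by
  simp [binomRStirlingSum, rstirlingTransform_zero]

theorem cast_add_one_mul_choose (N j : ℕ) :
    ((N : ℤ) + 1) * N.choose j = ((j : ℤ) + 1) * (N + 1).choose (j + 1) := by
  exact_mod_cast (Nat.add_one_mul_choose_eq N j).trans (mul_comm _ _)

theorem binomPowerSum_succ (q m : ℕ) :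
    binomPowerSum n (q + 1) m = (m + 1) * binomPowerSum n q (m + 1) - m * binomPowerSum n q m := by
  simp only [binomPowerSum, mul_sum, ← sum_sub_distrib]
  refine sum_congr rfl fun i _ => ?_
  have h := cast_add_one_mul_choose (i + m) m
  rw [← add_assoc]
  push_cast at h ⊢
  linear_combination ((i : ℤ) + 1) ^ q * h

theorem binomRStirlingSum_succ (q m : ℕ) :
    binomRStirlingSum n (q + 1) m =
      (m + 1) * binomRStirlingSum n q (m + 1) - m * binomRStirlingSum n q m := by
  rw [binomRStirlingSum, rstirlingTransform_succ, binomRStirlingSum, binomRStirlingSum,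
    ← rstirlingTransform_linear]
  congr 1
  funext k
  have h := cast_add_one_mul_choose (k + n + m) (k + m + 1)
  rw [show k + 1 + n + m = k + n + (m + 1) by omega, show k + 1 + m + 1 = k + (m + 1) + 1 by omega]
  push_cast at h ⊢
  linear_combination h

theorem binomRStirlingSum_eq_binomPowerSum (q m : ℕ) :
    binomRStirlingSum n q m = binomPowerSum n q m := by
  induction q generalizing m with
  | zero => rw [binomRStirlingSum_zero, binomPowerSum_zero]
  | succ q ih => rw [binomRStirlingSum_succ, binomPowerSum_succ, ih, ih]

end BinomialSums

theorem stmt14_general (n q : ℕ) :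
    (hS q 0 n : ℤ) = ∑ k ∈ Finset.range (q+1),
      (-1:ℤ)^k * (rstirling2 (n+1) q k : ℤ) * ((k+n).choose (k+1) : ℤ) * (Nat.factorial k : ℤ) := by
  have hpow : (hS q 0 n : ℤ) = binomPowerSum n q 0 := by
    rw [hS, binomPowerSum, range_eq_Ico, ← Ico_add_one_right_eq_Icc, ← zero_add 1, ← sum_Ico_add']
    push_cast
    simp
  rw [hpow, ← binomRStirlingSum_eq_binomPowerSum, binomRStirlingSum, rstirlingTransform]
  simp only [add_zero, mul_right_comm _ (_ ! : ℤ)]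

theorem stmt14 (n q : ℕ) (hn : 0 < n) (hq : 0 < q) (hqn : q ≤ n) :
    (hS q 0 n : ℤ) = ∑ k ∈ Finset.range (q+1),
      (-1:ℤ)^k * (rstirling2 (n+1) q k : ℤ) * ((k+n).choose (k+1) : ℤ) * (Nat.factorial k : ℤ) :=
  stmt14_general n q
end

section
/- Let q be a prime and n an integer with 1 ≤ n ≤ q-1. Then q * (h_n^{(q+1)} + n * h_q^{(n+1)}) ≡ n (mod q), where congruence of rationals a/b ≡ c/d (mod q) means q divides ad - bc, and h denotes hyperharmonic numbers. -/
open Finset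

/-!
By the closed form `h_n^{(r+1)} = C(n+r, r) (H_{n+r} - H_r)`, both hyperharmonic numbers carry the
factor `C = C(n+q, n)`, and `q (h_n^{(q+1)} + n h_q^{(n+1)}) = q C ((n+1) H_{n+q} - H_q - n H_n)`.
Among the reciprocals `1/k` occurring here only `1/q` is not `q`-integral (as `n < q`); it appears
with total coefficient `(n+1) - 1 = n`, so the expression is `n C` modulo `q ℤ_(q)`. Finally
`C ≡ 1 (mod q)` by Lucas' theorem.
-/

lemma hyperh_succ_succ (r n : ℕ) :
    hyperh (r + 1) (n + 1) = hyperh (r + 1) n + hyperh r (n + 1) :=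
  sum_Icc_succ_top (by omega) _

lemma hyperh_one (n : ℕ) : hyperh 1 n = harmonic n := by
  rw [harmonic_eq_sum_Icc, hyperh]
  refine sum_congr rfl fun k hk => ?_
  rw [hyperh, if_neg (by grind), one_div]

theorem hyperh_succ_eq_choose_mul_harmonic_sub (r n : ℕ) :
    hyperh (r + 1) n = (n + r).choose r * (harmonic (n + r) - harmonic r) := by
  induction r generalizing n with
  | zero => simp [hyperh_one]
  | succ r ihr =>
    induction n with
    | zero => simp [hyperh]
    | succ n ihn =>
      rw [hyperh_succ_succ, ihn, ihr, show n + 1 + r = n + r + 1 by omega,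
        show n + 1 + (r + 1) = n + r + 1 + 1 by omega, show n + (r + 1) = n + r + 1 by omega,
        Nat.choose_succ_succ' (n + r + 1), harmonic_succ (n + r + 1), harmonic_succ r]
      have absorb : ((n + r + 1 + 1 : ℕ) : ℚ) * (n + r + 1).choose r =
          ((n + r + 1).choose r + (n + r + 1).choose (r + 1) : ℕ) * (r + 1 : ℕ) := by
        rw [← Nat.choose_succ_succ']
        exact_mod_cast Nat.add_one_mul_choose_eq (n + r + 1) r
      push_cast at absorb ⊢
      field_simp
      linear_combination absorb

lemma harmonic_sub_harmonic {m k : ℕ} (h : m ≤ k) :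
    harmonic k - harmonic m = ∑ i ∈ Ioc m k, (i : ℚ)⁻¹ := by
  rw [sub_eq_iff_eq_add', harmonic_eq_sum_Icc, harmonic_eq_sum_Icc]
  exact (sum_Ioc_consecutive _ (Nat.zero_le m) h).symm

section PIntegral

variable (p : ℕ) [Fact p.Prime]

/-- The ring `ℤ_(p)` of rationals whose denominator is prime to `p`. -/
def pIntegralRat : Subring ℚ where
  carrier := {x | padicNorm p x ≤ 1}
  mul_mem' {x y} hx hy := by
    simpa only [Set.mem_ofPred_eq, padicNorm.mul] using mul_le_one₀ hx (padicNorm.nonneg y) hy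
  one_mem' := padicNorm.one.le
  add_mem' hx hy := padicNorm.nonarchimedean.trans (max_le hx hy)
  zero_mem' := by simp [padicNorm.zero]
  neg_mem' {x} hx := by simpa only [Set.mem_ofPred_eq, padicNorm.neg] using hx

variable {p}

lemma mem_pIntegralRat {x : ℚ} : x ∈ pIntegralRat p ↔ padicNorm p x ≤ 1 := Iff.rfl

lemma inv_natCast_mem_pIntegralRat {k : ℕ} (hk : ¬ p ∣ k) : (k : ℚ)⁻¹ ∈ pIntegralRat p := by
  rw [mem_pIntegralRat, ← one_div, padicNorm.div, padicNorm.one,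
    (padicNorm.nat_eq_one_iff k).mpr hk, div_one]

lemma harmonic_sub_harmonic_mem_pIntegralRat {m k : ℕ} (hmk : m ≤ k)
    (h : ∀ i ∈ Ioc m k, ¬ p ∣ i) : harmonic k - harmonic m ∈ pIntegralRat p := by
  rw [harmonic_sub_harmonic hmk]
  exact Subring.sum_mem _ fun i hi => inv_natCast_mem_pIntegralRat (h i hi)

lemma ratMod_of_sub_eq_mul {x y z : ℚ} (hz : z ∈ pIntegralRat p) (h : x - y = p * z) :
    ratMod p x y := by
  rw [ratMod, ← padicNorm.int_lt_one_iff]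
  have hnum : ((x.num * y.den - y.num * x.den : ℤ) : ℚ) = p * (z * x.den * y.den) := by
    push_cast
    rw [← Rat.mul_den_eq_num x, ← Rat.mul_den_eq_num y]
    linear_combination (x.den * y.den : ℚ) * h
  have hmem : z * x.den * y.den ∈ pIntegralRat p :=
    mul_mem (mul_mem hz (natCast_mem _ _)) (natCast_mem _ _)
  have hp : (1 : ℚ) < p := mod_cast (Fact.out : p.Prime).one_lt
  rw [hnum, padicNorm.mul, padicNorm.padicNorm_p_of_prime]
  calc (p : ℚ)⁻¹ * padicNorm p (z * x.den * y.den) ≤ (p : ℚ)⁻¹ :=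
        mul_le_of_le_one_right (by positivity) hmem
    _ < 1 := inv_lt_one_of_one_lt₀ hp

end PIntegral

lemma choose_add_prime_modEq_one {p n : ℕ} [Fact p.Prime] (hn : n < p) :
    (n + p).choose n ≡ 1 [ZMOD p] := by
  have := Choose.choose_modEq_choose_mod_mul_choose_div (n := n + p) (k := n) (p := p)
  simpa [Nat.mod_eq_of_lt hn, Nat.div_eq_of_lt hn] using this

theorem stmt16_general (q n : ℕ) (hq : q.Prime) (hn2 : n ≤ q - 1) :
    ratMod q ((q:ℚ) * (hyperh (q+1) n + (n:ℚ) * hyperh (n+1) q)) (n:ℚ) := by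
  have := Fact.mk hq
  have hnq : n < q := by have := hq.pos; omega
  obtain ⟨c, hc⟩ := (choose_add_prime_modEq_one hnq).symm.dvd
  have hC : ((n + q).choose n : ℚ) = 1 + q * c := by
    rw [← sub_eq_iff_eq_add']; exact_mod_cast hc
  have hHq : harmonic q = harmonic (q - 1) + (q : ℚ)⁻¹ := by
    simpa [Nat.sub_add_cancel hq.one_le] using harmonic_succ (q - 1)
  have hT : harmonic (n + q) - harmonic q ∈ pIntegralRat q :=
    harmonic_sub_harmonic_mem_pIntegralRat (by omega) fun i hi hdvd =>
      Nat.not_dvd_of_pos_of_lt (n := i - q) (by grind) (by grind) (Nat.dvd_sub hdvd dvd_rfl)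
  have hH : ∀ m < q, harmonic m ∈ pIntegralRat q := fun m hm => by
    simpa using harmonic_sub_harmonic_mem_pIntegralRat (Nat.zero_le m) fun i hi =>
      Nat.not_dvd_of_pos_of_lt (mem_Ioc.mp hi).1 (by grind)
  refine ratMod_of_sub_eq_mul (z := n * c + (n + q).choose n *
    ((n + 1) * (harmonic (n + q) - harmonic q) + n * (harmonic (q - 1) - harmonic n))) ?_ ?_
  · have hnat (m : ℕ) : (m : ℚ) ∈ pIntegralRat q := natCast_mem _ m
    exact add_mem (mul_mem (hnat n) (intCast_mem _ c)) <| mul_mem (hnat _) <|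
      add_mem (mul_mem (add_mem (hnat n) (one_mem _)) hT)
        (mul_mem (hnat n) (sub_mem (hH _ (by omega)) (hH n hnq)))
  · rw [hyperh_succ_eq_choose_mul_harmonic_sub, hyperh_succ_eq_choose_mul_harmonic_sub,
      ← Nat.choose_symm_add, Nat.add_comm q n]
    have hq0 : (q : ℚ) * (q : ℚ)⁻¹ = 1 := mul_inv_cancel₀ (mod_cast hq.ne_zero)
    linear_combination
      (n * q * (n + q).choose n : ℚ) * hHq + n * hC + (n * (n + q).choose n : ℚ) * hq0

theorem stmt16 (q n : ℕ) (hq : q.Prime) (hn1 : 1 ≤ n) (hn2 : n ≤ q - 1) :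
    ratMod q ((q:ℚ) * (hyperh (q+1) n + (n:ℚ) * hyperh (n+1) q)) (n:ℚ) :=
  stmt16_general q n hq hn2
end

section
/- For a prime number p and all positive integers n, nonnegative integers q: S_p^{(q)}(n) ≡ binomial(n+q+1, q+2) (mod p), where S_p^{(q)}(n) is the hyper-sum of p-th powers. -/
open Finset

/-!
Fermat's little theorem gives `k ^ p ≡ k (mod p)`, and congruences pass through the iterated sums,
so `S_p^{(q)}(n) ≡ S_1^{(q)}(n) (mod p)`. Iterating the hockey-stick identity shows
`S_1^{(q)}(n) = binomial(n + q + 1, q + 2)`.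
-/

theorem sum_Icc_one_add_choose (n r : ℕ) :
    ∑ k ∈ Icc 1 n, (k + r).choose (r + 1) = (n + r + 1).choose (r + 2) := by
  have hockey := Nat.sum_Icc_choose (n + r) (r + 1)
  rw [add_comm r 1, ← map_add_right_Icc, sum_map] at hockey
  simpa [add_comm 1 r] using hockey

theorem hS_one (q n : ℕ) : hS 1 q n = (n + q + 1).choose (q + 2) := by
  induction q generalizing n with
  | zero => simpa [hS] using sum_Icc_one_add_choose n 0
  | succ q ih =>
    simp only [hS, ih, add_assoc]
    exact sum_Icc_one_add_choose n (q + 1)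

theorem hS_modEq_of_pow_modEq {a b m : ℕ} (h : ∀ k, k ^ a ≡ k ^ b [MOD m]) (q n : ℕ) :
    hS a q n ≡ hS b q n [MOD m] := by
  induction q generalizing n with
  | zero => exact Nat.ModEq.sum fun k _ => h k
  | succ q ih => exact Nat.ModEq.sum fun k _ => ih k

theorem Nat.ModEq.pow_prime_eq_self {p : ℕ} (hp : p.Prime) (k : ℕ) : k ^ p ≡ k [MOD p] :=
  Int.natCast_modEq_iff.mp (by exact_mod_cast Int.ModEq.pow_prime_eq_self hp k)

theorem stmt17_general (p n q : ℕ) (hp : p.Prime) :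
    hS p q n ≡ (n+q+1).choose (q+2) [MOD p] := by
  have fermat : ∀ k, k ^ p ≡ k ^ 1 [MOD p] := fun k => by
    simpa using Nat.ModEq.pow_prime_eq_self hp k
  simpa [hS_one] using hS_modEq_of_pow_modEq fermat q n

theorem stmt17 (p n q : ℕ) (hp : p.Prime) (hn : 0 < n) :
    hS p q n ≡ (n+q+1).choose (q+2) [MOD p] :=
  stmt17_general p n q hp
end

section
/- For a prime number p, a positive integer n, and a nonnegative integer q, the poly-Bernoulli polynomial value satisfies B_n^{(-p)}(q) ≡ (q+2)^n (mod p). -/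
open Finset

/-!
`j! S(n, j)` is the `j`-th forward difference of `r ↦ r ^ n` at `0`: both satisfy
`f(n+1, j+1) = (j+1) (f(n, j+1) + f(n, j))`, the second by the Leibniz rule
`Δ^{j+1}(r g)(0) = (j+1) Δ^j g(1)`. On `ZMod p` Fermat gives `r ^ p = r`, so
`j! S(p, j) ≡ j! S(1, j) (mod p)`, which vanishes unless `j = 1`. Only the term `j = 1`
survives, and it is `(-1)^(p+1) (q+2)^n ≡ (q+2)^n`.
-/

open fwdDiff
open scoped Nat

lemma fwdDiff_iter_succ_apply {M G : Type*} [AddCommMonoid M] [AddCommGroup G] (h : M)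
    (f : M → G) (k : ℕ) (y : M) :
    Δ_[h] ^[k + 1] f y = Δ_[h] ^[k] f (y + h) - Δ_[h] ^[k] f y :=
  Function.iterate_succ_apply' _ _ _ ▸ rfl

section FwdDiff

variable {R : Type*} [CommRing R]

lemma fwdDiff_iter_succ_id_mul (g : R → R) (k : ℕ) (y : R) :
    Δ_[1] ^[k + 1] (fun r ↦ r * g r) y
      = y * Δ_[1] ^[k + 1] g y + (k + 1) * Δ_[1] ^[k] g (y + 1) := by
  induction k generalizing y with
  | zero =>
    simp only [zero_add, Function.iterate_one, fwdDiff, Nat.cast_zero, Function.iterate_zero,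
      id_eq, one_mul]
    ring
  | succ k ih =>
    rw [fwdDiff_iter_succ_apply 1, ih, ih, fwdDiff_iter_succ_apply 1 g (k + 1),
      fwdDiff_iter_succ_apply 1 g k (y + 1)]
    push_cast
    ring

lemma factorial_mul_stirling2_eq_fwdDiff_iter_pow (n j : ℕ) :
    (j ! * stirling2 n j : R) = Δ_[1] ^[j] (fun r : R ↦ r ^ n) 0 := by
  induction n generalizing j with
  | zero =>
    rcases j with _ | j
    · simp [stirling2]
    · rw [fwdDiff_iter_pow_eq_zero_of_lt j.succ_pos]
      simp [stirling2]
  | succ n ih =>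
    rcases j with _ | j
    · simp [stirling2]
    · have hrec : stirling2 (n + 1) (j + 1) = (j + 1) * stirling2 n (j + 1) + stirling2 n j := rfl
      have hshift := fwdDiff_iter_succ_apply 1 (fun r : R ↦ r ^ n) j 0
      simp_rw [pow_succ' _ n, fwdDiff_iter_succ_id_mul, zero_mul, zero_add]
      rw [zero_add, ← ih, ← ih, Nat.factorial_succ] at hshift
      rw [hrec, Nat.factorial_succ]
      push_cast at hshift ⊢
      linear_combination (↑j + 1 : R) * hshift

end FwdDiff

lemma stirling2_one_left (j : ℕ) : stirling2 1 j = if j = 1 then 1 else 0 := by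
  rcases j with _ | _ | j <;> rfl

lemma factorial_mul_stirling2_prime_left {p : ℕ} [Fact p.Prime] (j : ℕ) :
    (j ! * stirling2 p j : ZMod p) = j ! * stirling2 1 j := by
  rw [factorial_mul_stirling2_eq_fwdDiff_iter_pow, factorial_mul_stirling2_eq_fwdDiff_iter_pow]
  simp_rw [ZMod.pow_card, pow_one]

lemma neg_one_pow_prime_add_one {p : ℕ} [Fact p.Prime] : (-1 : ZMod p) ^ (p + 1) = 1 := by
  rw [pow_succ, ZMod.pow_card, neg_one_mul, neg_neg]

theorem stmt18_general (p n q : ℕ) (hp : p.Prime) :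
    (∑ j ∈ Finset.Icc 1 p,
        (stirling2 p j : ℤ) * (-1:ℤ)^(p+j) * (Nat.factorial j : ℤ) * ((j:ℤ)+(q:ℤ)+1)^n)
      ≡ ((q:ℤ)+2)^n [ZMOD (p:ℤ)] := by
  have : Fact p.Prime := ⟨hp⟩
  rw [← ZMod.intCast_eq_intCast_iff]
  push_cast
  have hterm : ∀ j ∈ Icc 1 p, (stirling2 p j : ZMod p) * (-1) ^ (p + j) * j ! * (j + q + 1) ^ n
      = if j = 1 then ((q : ZMod p) + 2) ^ n else 0 := by
    intro j _
    calc (stirling2 p j : ZMod p) * (-1) ^ (p + j) * j ! * (j + q + 1) ^ n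
        = (j ! * stirling2 p j : ZMod p) * ((-1) ^ (p + j) * (j + q + 1) ^ n) := by ring
      _ = _ := by
        rw [factorial_mul_stirling2_prime_left, stirling2_one_left]
        split_ifs with hj
        · subst hj
          rw [neg_one_pow_prime_add_one]
          ring
        · simp
  rw [sum_congr rfl hterm, sum_ite_eq', if_pos (mem_Icc.mpr ⟨le_rfl, hp.one_le⟩)]

theorem stmt18 (p n q : ℕ) (hp : p.Prime) (hn : 0 < n) :
    (∑ j ∈ Finset.Icc 1 p,
        (stirling2 p j : ℤ) * (-1:ℤ)^(p+j) * (Nat.factorial j : ℤ) * ((j:ℤ)+(q:ℤ)+1)^n)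
      ≡ ((q:ℤ)+2)^n [ZMOD (p:ℤ)] :=
  stmt18_general p n q hp
end
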